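/- If a finite play v·ρ·v'·ρ' yields hierarchical information with preorder ⪯ (i.e., for all agents a ⪯ b, the information set of a after the play is contained in that of b), then the suffix play v'·ρ' starting at v' also yields hierarchical information with the same preorder ⪯. -/

import Mathlib

/-- Synchronous perfect-recall extension of a relation on positions. -/
def synchPR {V : Type*} (r : V → V → Prop) (ρ ρ' : List V) : Prop :=
  ρ.length = ρ'.length ∧
    ∀ i (h : i < ρ.length) (h' : i < ρ'.length), r (ρ.get ⟨i, h⟩) (ρ'.get ⟨i, h'⟩)

/-- A finite play from `v0` in a CGS with transition function `δ`:
a nonempty word of positions starting at `v0` whose consecutive positions are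
related by some joint move. -/
def isPlay {V Ag Mov : Type*} (δ : V → (Ag → Mov) → V) (v0 : V) (ρ : List V) : Prop :=
  ρ ≠ [] ∧ ρ.head? = some v0 ∧
    ∀ i (h : i + 1 < ρ.length),
      ∃ c : Ag → Mov, δ (ρ.get ⟨i, Nat.lt_of_succ_lt h⟩) c = ρ.get ⟨i + 1, h⟩

/-- Information set of agent `a` after the finite play `ρ` from `v0`. -/
def infoSet {V Ag Mov : Type*} (obs : Ag → V → V → Prop)
    (δ : V → (Ag → Mov) → V) (v0 : V) (a : Ag) (ρ : List V) : Set (List V) :=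
  {ρ' | isPlay δ v0 ρ' ∧ synchPR (obs a) ρ ρ'}

/-- A finite play `ρ` from `v0` yields hierarchical information for preorder `pre`. -/
def yieldsHier {V Ag Mov : Type*} (obs : Ag → V → V → Prop)
    (δ : V → (Ag → Mov) → V) (pre : Ag → Ag → Prop) (v0 : V) (ρ : List V) : Prop :=
  ∀ a b, pre a b → infoSet obs δ v0 a ρ ⊆ infoSet obs δ v0 b ρ

/-! A play from `v'` that agent `a` cannot distinguish from `v'·ρ'` becomes, once prefixed by
`v·ρ`, a play from `v` that `a` cannot distinguish from `v·ρ·v'·ρ'`. Hierarchy at the long play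
makes it indistinguishable for `b` as well, and under synchronous perfect recall the common
prefix can be dropped again. -/

section

variable {V Ag Mov : Type*}

theorem synchPR_iff_forall₂ {r : V → V → Prop} {ρ ρ' : List V} :
    synchPR r ρ ρ' ↔ List.Forall₂ r ρ ρ' :=
  List.forall₂_iff_get.symm

theorem synchPR_refl {r : V → V → Prop} (hr : ∀ x, r x x) (ρ : List V) : synchPR r ρ ρ :=
  synchPR_iff_forall₂.2 <| List.forall₂_same.2 fun x _ => hr x

theorem synchPR.append {r : V → V → Prop} {μ μ' σ σ' : List V}
    (hμ : synchPR r μ μ') (hσ : synchPR r σ σ') : synchPR r (μ ++ σ) (μ' ++ σ') :=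
  synchPR_iff_forall₂.2 <| List.rel_append (synchPR_iff_forall₂.1 hμ) (synchPR_iff_forall₂.1 hσ)

theorem synchPR.of_append_left {r : V → V → Prop} {μ σ σ' : List V}
    (h : synchPR r (μ ++ σ) (μ ++ σ')) : synchPR r σ σ' := by
  have := List.forall₂_drop μ.length (synchPR_iff_forall₂.1 h)
  rwa [List.drop_left, List.drop_left, ← synchPR_iff_forall₂] at this

def IsSuccessor (δ : V → (Ag → Mov) → V) (x y : V) : Prop :=
  ∃ c : Ag → Mov, δ x c = y

theorem isPlay_iff {δ : V → (Ag → Mov) → V} {v₀ : V} {ρ : List V} :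
    isPlay δ v₀ ρ ↔ ρ.head? = some v₀ ∧ ρ.IsChain (IsSuccessor δ) := by
  rw [List.isChain_iff_getElem]
  constructor
  · exact fun ⟨_, hhead, hstep⟩ => ⟨hhead, hstep⟩
  · exact fun ⟨hhead, hstep⟩ => ⟨by rintro rfl; simp at hhead, hhead, hstep⟩

theorem isPlay.append_of_isPlay {δ : V → (Ag → Mov) → V} {v v' : V} {μ σ π : List V}
    (h : isPlay δ v (μ ++ v' :: σ)) (hπ : isPlay δ v' π) : isPlay δ v (μ ++ π) := by
  obtain ⟨hhead, hchain⟩ := isPlay_iff.1 h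
  obtain ⟨hπhead, hπchain⟩ := isPlay_iff.1 hπ
  have hsame_head : π.head? = (v' :: σ).head? := hπhead
  obtain ⟨hμ, -, hjoin⟩ := List.isChain_append.1 hchain
  refine isPlay_iff.2 ⟨?_, List.isChain_append.2 ⟨hμ, hπchain, ?_⟩⟩
  · rwa [List.head?_append, hsame_head, ← List.head?_append]
  · rwa [hsame_head]

end

/-- if the finite play `v·ρ·v'·ρ'` yields hierarchical information
with preorder `pre` (from initial position `v`), then the suffix play `v'·ρ'`
yields hierarchical information with the same preorder (from `v'`). -/
theorem suffix_yieldsHier {V Ag Mov : Type*} (obs : Ag → V → V → Prop)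
    (hobs : ∀ a, Equivalence (obs a))
    (δ : V → (Ag → Mov) → V) (pre : Ag → Ag → Prop)
    (v v' : V) (ρ ρ' : List V)
    (hplay : isPlay δ v (v :: ρ ++ v' :: ρ'))
    (hhier : yieldsHier obs δ pre v (v :: ρ ++ v' :: ρ')) :
    yieldsHier obs δ pre v' (v' :: ρ') := by
  intro a b hab π ⟨hπ, hπa⟩
  have hlift : v :: ρ ++ π ∈ infoSet obs δ v a (v :: ρ ++ v' :: ρ') :=
    ⟨hplay.append_of_isPlay hπ, (synchPR_refl (hobs a).refl _).append hπa⟩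
  exact ⟨hπ, (hhier a b hab hlift).2.of_append_left⟩
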